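/- arXiv:2411.09430 — 5 statements merged into one kernel-verified Lean document; each statement's English description precedes it below -/
import Mathlib

section
/- Let X be a Banach sequence space on a countable index set Γ and fix γ₀ ∈ Γ. Then X is strictly monotone on the γ₀-th coordinate (i.e., for all x, y ≥ 0 in X with x(γ) ≤ y(γ) for γ ≠ γ₀ and x(γ₀) < y(γ₀) one has ‖x‖ < ‖y‖) if and only if the following weaker condition holds: whenever x, y ≥ 0 in X satisfy x(γ) = y(γ) for all γ ≠ γ₀, x(γ₀) = 0 and y(γ₀) > 0, then ‖x‖ < ‖y‖. -/
open Filter Topology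

/-- In a Banach sequence space on a countable set `Γ`, strict monotonicity on the
`γ₀`-th coordinate is equivalent to the (formally weaker) condition involving coordinates that
agree off `γ₀` and vanish at `γ₀`. -/
theorem stmt0 (Γ : Type*) [Countable Γ] (E : Type*) [NormedAddCommGroup E]
    [NormedSpace ℝ E] [CompleteSpace E]
    (coord : E →ₗ[ℝ] Γ → ℝ) (hinj : Function.Injective coord)
    (hind : ∀ s : Set Γ, s.Finite → ∃ x : E, coord x = s.indicator 1)
    (hideal : ∀ (f : Γ → ℝ) (y : E), (∀ γ, |f γ| ≤ |coord y γ|) →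
      ∃ x : E, coord x = f ∧ ‖x‖ ≤ ‖y‖)
    (γ₀ : Γ) :
    (∀ x y : E, (∀ γ, 0 ≤ coord x γ) → (∀ γ, 0 ≤ coord y γ) →
        (∀ γ, γ ≠ γ₀ → coord x γ ≤ coord y γ) → coord x γ₀ < coord y γ₀ → ‖x‖ < ‖y‖)
    ↔
    (∀ x y : E, (∀ γ, 0 ≤ coord x γ) → (∀ γ, 0 ≤ coord y γ) →
        (∀ γ, γ ≠ γ₀ → coord x γ = coord y γ) → coord x γ₀ = 0 → 0 < coord y γ₀ →
        ‖x‖ < ‖y‖) := by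
  constructor
  · intro H x y hx hy heq hx0 hy0
    exact H x y hx hy (fun γ hγ => (heq γ hγ).le) (hx0 ▸ hy0)
  · intro H x y hx hy hle hlt
    classical
    have hy0 : 0 < coord y γ₀ := lt_of_le_of_lt (hx γ₀) hlt
    -- w : y with γ₀-coordinate set to 0
    obtain ⟨w, hw, -⟩ := hideal (Function.update (coord y) γ₀ 0) y (by
      intro γ
      by_cases h : γ = γ₀
      · subst h; simp
      · rw [Function.update_of_ne h])
    have hw0 : coord w γ₀ = 0 := by rw [hw]; simp
    have hweq : ∀ γ, γ ≠ γ₀ → coord w γ = coord y γ := by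
      intro γ hγ; rw [hw, Function.update_of_ne hγ]
    have hwpos : ∀ γ, 0 ≤ coord w γ := by
      intro γ
      by_cases h : γ = γ₀
      · subst h; rw [hw0]
      · rw [hweq γ h]; exact hy γ
    have hwy : ‖w‖ < ‖y‖ := H w y hwpos hy hweq hw0 hy0
    -- z : y with γ₀-coordinate set to coord x γ₀
    set t : ℝ := coord x γ₀ / coord y γ₀ with ht
    have ht0 : 0 ≤ t := div_nonneg (hx γ₀) hy0.le
    have ht1 : t < 1 := (div_lt_one hy0).mpr hlt
    set z : E := t • y + (1 - t) • w with hz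
    have hzc : ∀ γ, coord z γ = if γ = γ₀ then coord x γ₀ else coord y γ := by
      intro γ
      have : coord z γ = t * coord y γ + (1 - t) * coord w γ := by
        simp [hz, map_add, map_smul]
      rw [this]
      by_cases h : γ = γ₀
      · subst h
        rw [hw0, mul_zero, add_zero, ht, div_mul_cancel₀ _ hy0.ne', if_pos rfl]
      · rw [if_neg h, hweq γ h]; ring
    have hzy : ‖z‖ < ‖y‖ := by
      calc ‖z‖ ≤ t * ‖y‖ + (1 - t) * ‖w‖ := by
            refine (norm_add_le _ _).trans ?_
            rw [norm_smul, norm_smul, Real.norm_of_nonneg ht0,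
              Real.norm_of_nonneg (by linarith)]
        _ < t * ‖y‖ + (1 - t) * ‖y‖ := by
            have : (0:ℝ) < 1 - t := by linarith
            nlinarith
        _ = ‖y‖ := by ring
    -- ‖x‖ ≤ ‖z‖ by the ideal property
    obtain ⟨x', hx', hxz⟩ := hideal (coord x) z (by
      intro γ
      rw [abs_of_nonneg (hx γ), hzc γ]
      by_cases h : γ = γ₀
      · rw [if_pos h, h, abs_of_nonneg (hx γ₀)]
      · rw [if_neg h, abs_of_nonneg (hy γ)]; exact hle γ h)
    have : x' = x := hinj hx'
    rw [this] at hxz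
    exact lt_of_le_of_lt hxz hzy
end

section
/- Let {X_γ}_{γ∈Γ} be a countable family of Banach spaces and let ℰ be a separable (equivalently: order continuous) Banach sequence space on Γ. Then the topological dual of the ℰ-direct sum (⊕_{γ∈Γ} X_γ)_ℰ is naturally isometrically isomorphic to (⊕_{γ∈Γ} X_γ*)_{ℰ^×}, where ℰ^× denotes the Köthe dual of ℰ. The isometric isomorphism sends φ = {φ_γ} to the functional x ↦ Σ_γ φ_γ(x_γ). -/
open Filter Topology

lemma aux_dual_approx {E : Type*} [NormedAddCommGroup E] [NormedSpace ℝ E]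
    (g : E →L[ℝ] ℝ) {δ : ℝ} (hδ : 0 < δ) : ∃ v : E, ‖v‖ ≤ 1 ∧ ‖g‖ - δ ≤ g v := by
  by_cases h0 : ‖g‖ - δ ≤ 0
  · exact ⟨0, by simp, by simpa using h0⟩
  push_neg at h0
  by_contra hc
  push_neg at hc
  have hb : ∀ v : E, ‖g v‖ ≤ (‖g‖ - δ) * ‖v‖ := by
    intro v
    rcases eq_or_ne v 0 with rfl | hv
    · simp
    · have hnv : (0:ℝ) < ‖v‖ := norm_pos_iff.mpr hv
      set w := ‖v‖⁻¹ • v with hw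
      have hwn : ‖w‖ ≤ 1 := by
        rw [hw, norm_smul, norm_inv, norm_norm, inv_mul_cancel₀ hnv.ne']
      have h1 : g w < ‖g‖ - δ := hc w hwn
      have h2 : g (-w) < ‖g‖ - δ := hc (-w) (by simpa using hwn)
      have h3 : |g w| ≤ ‖g‖ - δ := by
        rw [abs_le]; constructor
        · have : -(g w) < ‖g‖ - δ := by simpa using h2
          linarith
        · linarith
      have hv' : g v = ‖v‖ * g w := by
        rw [hw, map_smul, smul_eq_mul, ← mul_assoc, mul_inv_cancel₀ hnv.ne', one_mul]
      rw [Real.norm_eq_abs, hv', abs_mul, abs_of_nonneg hnv.le, mul_comm]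
      exact mul_le_mul_of_nonneg_right h3 hnv.le
  have := g.opNorm_le_bound (by linarith) hb
  linarith

/-- For a countable family of Banach spaces `X γ` and a separable (equivalently,
order continuous) Banach sequence space `ℰ` on `Γ` (modelled by a membership predicate `Emem`
and a norm `EN` on `Γ → ℝ`), the topological dual of the `ℰ`-direct sum `(⊕_γ X_γ)_ℰ` is
naturally isometrically isomorphic to `(⊕_γ X_γ*)_{ℰ^×}`, the direct sum of the duals over the
Köthe dual of `ℰ`, via `φ = {φ_γ} ↦ (x ↦ ∑_γ φ_γ(x_γ))`. -/
theorem stmt6 (Γ : Type*) [Countable Γ] [DecidableEq Γ]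
    (X : Γ → Type*) [∀ γ, NormedAddCommGroup (X γ)] [∀ γ, NormedSpace ℝ (X γ)]
    [∀ γ, CompleteSpace (X γ)]
    (Emem : (Γ → ℝ) → Prop) (EN : (Γ → ℝ) → ℝ)
    -- ℰ is a linear subspace of ℝ^Γ containing the indicators of finite sets,
    -- with the ideal property:
    (hzero : Emem 0) (hadd : ∀ f g, Emem f → Emem g → Emem (f + g))
    (hsmul : ∀ (c : ℝ) f, Emem f → Emem (c • f))
    (hind : ∀ s : Set Γ, s.Finite → Emem (s.indicator 1))
    (hideal : ∀ f g, (∀ γ, |f γ| ≤ |g γ|) → Emem g → Emem f ∧ EN f ≤ EN g)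
    -- norm axioms:
    (hN0 : EN 0 = 0) (hNeq : ∀ f, Emem f → EN f = 0 → f = 0)
    (hNadd : ∀ f g, Emem f → Emem g → EN (f + g) ≤ EN f + EN g)
    (hNsmul : ∀ (c : ℝ) f, Emem f → EN (c • f) = |c| * EN f)
    -- completeness:
    (hcomplete : ∀ u : ℕ → (Γ → ℝ), (∀ n, Emem (u n)) →
      (∀ ε : ℝ, 0 < ε → ∃ N₀ : ℕ, ∀ m n, N₀ ≤ m → N₀ ≤ n → EN (u m - u n) < ε) →
      ∃ f, Emem f ∧ Tendsto (fun n => EN (u n - f)) atTop (nhds 0))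
    -- order continuity (equivalently, separability):
    (hOC : ∀ f, Emem f → ∀ s : ℕ → Set Γ, (∀ n, s (n+1) ⊆ s n) →
      (⋂ n, s n) = ∅ → (∀ n, (s n)ᶜ.Finite) →
      Tendsto (fun n => EN ((s n).indicator f)) atTop (nhds 0)) :
    -- (1) each family `g = {g γ}` of functionals with `(‖g γ‖)_γ` in the Köthe dual of ℰ
    -- induces a functional on the direct sum whose dual norm equals the Köthe-dual norm:
    (∀ g : ∀ γ, X γ →L[ℝ] ℝ,
        (∀ f : Γ → ℝ, Emem f → Summable (fun γ => |f γ * ‖g γ‖|)) →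
        (∀ x : ∀ γ, X γ, Emem (fun γ => ‖x γ‖) → Summable (fun γ => g γ (x γ))) ∧
        sSup {r : ℝ | ∃ x : ∀ γ, X γ, Emem (fun γ => ‖x γ‖) ∧ EN (fun γ => ‖x γ‖) ≤ 1 ∧
            r = |∑' γ, g γ (x γ)|}
          = sSup {r : ℝ | ∃ f : Γ → ℝ, Emem f ∧ EN f ≤ 1 ∧ r = ∑' γ, |f γ * ‖g γ‖|})
    ∧
    -- (2) conversely, every bounded linear functional on the direct sum is represented by a
    -- unique such family:
    (∀ φ : (∀ γ, X γ) → ℝ,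
        (∀ x y : ∀ γ, X γ, Emem (fun γ => ‖x γ‖) → Emem (fun γ => ‖y γ‖) →
          φ (x + y) = φ x + φ y) →
        (∀ (c : ℝ) (x : ∀ γ, X γ), Emem (fun γ => ‖x γ‖) → φ (c • x) = c * φ x) →
        (∃ C : ℝ, ∀ x : ∀ γ, X γ, Emem (fun γ => ‖x γ‖) → |φ x| ≤ C * EN (fun γ => ‖x γ‖)) →
        ∃! g : ∀ γ, X γ →L[ℝ] ℝ,
          (∀ f : Γ → ℝ, Emem f → Summable (fun γ => |f γ * ‖g γ‖|)) ∧
          (∀ x : ∀ γ, X γ, Emem (fun γ => ‖x γ‖) → φ x = ∑' γ, g γ (x γ))) := by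
  constructor
  · intro g hg
    -- summability of |g γ (x γ)| for x in the direct sum
    have habs : ∀ x : ∀ γ, X γ, Emem (fun γ => ‖x γ‖) →
        ∀ γ, ‖g γ (x γ)‖ ≤ |‖x γ‖ * ‖g γ‖| := by
      intro x hx γ
      calc ‖g γ (x γ)‖ ≤ ‖g γ‖ * ‖x γ‖ := (g γ).le_opNorm _
        _ = |‖x γ‖ * ‖g γ‖| := by
            rw [abs_of_nonneg (mul_nonneg (norm_nonneg _) (norm_nonneg _)), mul_comm]
    have hsum : ∀ x : ∀ γ, X γ, Emem (fun γ => ‖x γ‖) → Summable (fun γ => g γ (x γ)) := by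
      intro x hx
      exact Summable.of_norm_bounded (hg _ hx) (habs x hx)
    refine ⟨hsum, ?_⟩
    set A := {r : ℝ | ∃ x : ∀ γ, X γ, Emem (fun γ => ‖x γ‖) ∧ EN (fun γ => ‖x γ‖) ≤ 1 ∧
        r = |∑' γ, g γ (x γ)|} with hAdef
    set B := {r : ℝ | ∃ f : Γ → ℝ, Emem f ∧ EN f ≤ 1 ∧ r = ∑' γ, |f γ * ‖g γ‖|} with hBdef
    have hE0 : Emem (fun γ => ‖(0 : ∀ γ, X γ) γ‖) := by
      have : (fun γ => ‖(0 : ∀ γ, X γ) γ‖) = 0 := by funext γ; simp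
      rw [this]; exact hzero
    have hA0 : (0:ℝ) ∈ A := by
      refine ⟨0, hE0, ?_, ?_⟩
      · have : (fun γ => ‖(0 : ∀ γ, X γ) γ‖) = 0 := by funext γ; simp
        rw [this, hN0]; norm_num
      · simp
    have hB0 : (0:ℝ) ∈ B := ⟨0, hzero, by rw [hN0]; norm_num, by simp⟩
    -- easy direction: every element of A is dominated by an element of B
    have hAB : ∀ r ∈ A, ∃ r' ∈ B, r ≤ r' := by
      rintro r ⟨x, hx, hxn, rfl⟩
      refine ⟨∑' γ, |‖x γ‖ * ‖g γ‖|, ⟨_, hx, hxn, rfl⟩, ?_⟩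
      have hns : Summable (fun γ => ‖g γ (x γ)‖) :=
        Summable.of_nonneg_of_le (fun _ => norm_nonneg _) (habs x hx) (hg _ hx)
      calc |∑' γ, g γ (x γ)| ≤ ∑' γ, ‖g γ (x γ)‖ := by
            simpa using norm_tsum_le_tsum_norm hns
        _ ≤ ∑' γ, |‖x γ‖ * ‖g γ‖| := Summable.tsum_le_tsum (habs x hx) hns (hg _ hx)
    -- approximation: every element of B is approximated from below by elements of A
    have hBA : ∀ f : Γ → ℝ, Emem f → EN f ≤ 1 → ∀ ε : ℝ, 0 < ε →
        ∃ r' ∈ A, (∑' γ, |f γ * ‖g γ‖|) - ε ≤ r' := by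
      intro f hf hfn ε hε
      have hS : Summable (fun γ => |f γ * ‖g γ‖|) := hg f hf
      set S := ∑' γ, |f γ * ‖g γ‖| with hSdef
      -- choose a finite set capturing most of the sum
      have h1 : ∀ᶠ (t : Finset Γ) in atTop, S - ε/2 < ∑ γ ∈ t, |f γ * ‖g γ‖| :=
        hS.hasSum.eventually (eventually_gt_nhds (by linarith))
      obtain ⟨s, hs⟩ := h1.exists
      set T := ∑ γ ∈ s, |f γ| with hTdef
      have hT0 : 0 ≤ T := Finset.sum_nonneg fun _ _ => abs_nonneg _
      set δ := ε / (2 * (T + 1)) with hδdef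
      have hδ : 0 < δ := by positivity
      choose v hv1 hv2 using fun γ => aux_dual_approx (g γ) (δ := δ) hδ
      set x : ∀ γ, X γ := fun γ => if γ ∈ s then |f γ| • v γ else 0 with hxdef
      have hxle : ∀ γ, |‖x γ‖| ≤ |f γ| := by
        intro γ
        rw [abs_norm, hxdef]
        by_cases h : γ ∈ s
        · simp only [if_pos h, norm_smul, Real.norm_eq_abs, abs_abs]
          calc |f γ| * ‖v γ‖ ≤ |f γ| * 1 := mul_le_mul_of_nonneg_left (hv1 γ) (abs_nonneg _)
            _ = |f γ| := mul_one _
        · simp [if_neg h]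
      obtain ⟨hxE, hxEN⟩ := hideal _ f hxle hf
      have htsum : ∑' γ, g γ (x γ) = ∑ γ ∈ s, (|f γ| * g γ (v γ)) := by
        rw [tsum_eq_sum (f := fun γ => g γ (x γ)) (s := s)]
        · refine Finset.sum_congr rfl fun γ hγ => ?_
          rw [hxdef]; simp only [if_pos hγ, map_smul, smul_eq_mul]
        · intro γ hγ
          rw [hxdef]; simp [if_neg hγ]
      have hlow : S - ε ≤ ∑' γ, g γ (x γ) := by
        rw [htsum]
        have h2 : ∀ γ ∈ s, |f γ| * ‖g γ‖ - |f γ| * δ ≤ |f γ| * g γ (v γ) := by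
          intro γ _
          have := mul_le_mul_of_nonneg_left (hv2 γ) (abs_nonneg (f γ))
          calc |f γ| * ‖g γ‖ - |f γ| * δ = |f γ| * (‖g γ‖ - δ) := by ring
            _ ≤ |f γ| * g γ (v γ) := this
        have h3 : ∑ γ ∈ s, (|f γ| * ‖g γ‖ - |f γ| * δ) ≤ ∑ γ ∈ s, |f γ| * g γ (v γ) :=
          Finset.sum_le_sum h2
        have h4 : ∑ γ ∈ s, (|f γ| * ‖g γ‖ - |f γ| * δ)
            = (∑ γ ∈ s, |f γ * ‖g γ‖|) - δ * T := by
          rw [Finset.sum_sub_distrib, ← Finset.sum_mul, hTdef]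
          congr 1
          · exact Finset.sum_congr rfl fun γ _ => by rw [abs_mul, abs_norm]
          · rw [mul_comm]
        have h5 : δ * T ≤ ε / 2 := by
          rw [hδdef]
          rw [div_mul_eq_mul_div, div_le_iff₀ (by positivity)]
          have : T ≤ T + 1 := by linarith
          calc ε * T ≤ ε * (T+1) := by nlinarith
            _ = ε / 2 * (2 * (T + 1)) := by ring
        have := hs.le
        linarith
      refine ⟨|∑' γ, g γ (x γ)|, ⟨x, hxE, le_trans hxEN hfn, rfl⟩, ?_⟩
      exact le_trans hlow (le_abs_self _)
    -- now the sSup equality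
    by_cases hBb : BddAbove B
    · have hAb : BddAbove A := by
        obtain ⟨M, hM⟩ := hBb
        refine ⟨M, fun r hr => ?_⟩
        obtain ⟨r', hr', h⟩ := hAB r hr
        exact h.trans (hM hr')
      apply le_antisymm
      · refine csSup_le ⟨0, hA0⟩ fun r hr => ?_
        obtain ⟨r', hr', h⟩ := hAB r hr
        exact h.trans (le_csSup hBb hr')
      · refine csSup_le ⟨0, hB0⟩ fun r hr => ?_
        obtain ⟨f, hf, hfn, rfl⟩ := hr
        refine le_of_forall_pos_le_add fun ε hε => ?_
        obtain ⟨r', hr', h⟩ := hBA f hf hfn ε hε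
        have := le_csSup hAb hr'
        linarith
    · have hAb : ¬ BddAbove A := by
        rintro ⟨M, hM⟩
        apply hBb
        refine ⟨M, fun r hr => ?_⟩
        obtain ⟨f, hf, hfn, rfl⟩ := hr
        refine le_of_forall_pos_le_add fun ε hε => ?_
        obtain ⟨r', hr', h⟩ := hBA f hf hfn ε hε
        have := hM hr'
        linarith
      rw [Real.sSup_of_not_bddAbove hAb, Real.sSup_of_not_bddAbove hBb]
  · -- nonnegativity of the norm
    have hENnn : ∀ f, Emem f → 0 ≤ EN f := by
      intro f hf
      have h1 : Emem (-f) := by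
        have := hsmul (-1) f hf
        simpa [neg_smul, one_smul] using this
      have h2 := hNadd f (-f) hf h1
      have h3 : EN (-f) = EN f := by
        have := hNsmul (-1) f hf
        simpa [neg_smul, one_smul] using this
      have h4 : f + -f = 0 := by abel
      rw [h4, hN0, h3] at h2
      linarith
    -- norms of Pi.single
    have hnormsingle : ∀ (γ : Γ) (v : X γ) (γ' : Γ),
        ‖Pi.single γ v γ'‖ = ‖v‖ * ({γ} : Set Γ).indicator 1 γ' := by
      intro γ v γ'
      by_cases h : γ' = γ
      · subst h; simp
      · rw [Pi.single_eq_of_ne h, Set.indicator_of_notMem (by simpa using h)]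
        simp
    have hEsingle : ∀ (γ : Γ) (v : X γ), Emem (fun γ' => ‖Pi.single γ v γ'‖) ∧
        EN (fun γ' => ‖Pi.single γ v γ'‖) ≤ ‖v‖ * EN (({γ} : Set Γ).indicator 1) := by
      intro γ v
      have hg : Emem (‖v‖ • ({γ} : Set Γ).indicator 1) :=
        hsmul _ _ (hind {γ} (Set.finite_singleton γ))
      have hle : ∀ γ', |(fun γ' => ‖Pi.single γ v γ'‖) γ'|
          ≤ |(‖v‖ • ({γ} : Set Γ).indicator 1) γ'| := by
        intro γ'
        rw [abs_norm, hnormsingle]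
        simp only [Pi.smul_apply, smul_eq_mul]
        exact le_abs_self _
      obtain ⟨h1, h2⟩ := hideal _ _ hle hg
      refine ⟨h1, h2.trans ?_⟩
      rw [hNsmul _ _ (hind {γ} (Set.finite_singleton γ)), abs_norm]
    intro φ hφadd hφsmul hφbdd
    obtain ⟨C, hC0⟩ := hφbdd
    have hC : ∀ x : ∀ γ, X γ, Emem (fun γ => ‖x γ‖) → |φ x| ≤ |C| * EN (fun γ => ‖x γ‖) := by
      intro x hx
      exact (hC0 x hx).trans (mul_le_mul_of_nonneg_right (le_abs_self C) (hENnn _ hx))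
    -- the candidate family of functionals
    set g : ∀ γ, X γ →L[ℝ] ℝ := fun γ =>
      LinearMap.mkContinuous
        { toFun := fun v => φ (Pi.single γ v)
          map_add' := by
            intro v w
            show φ (Pi.single γ (v + w)) = φ (Pi.single γ v) + φ (Pi.single γ w)
            rw [Pi.single_add]
            exact hφadd _ _ (hEsingle γ v).1 (hEsingle γ w).1
          map_smul' := by
            intro c v
            show φ (Pi.single γ (c • v)) = c * φ (Pi.single γ v)
            rw [Pi.single_smul]
            simpa using hφsmul c _ (hEsingle γ v).1 }
        (|C| * EN (({γ} : Set Γ).indicator 1))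
        (by
          intro v
          simp only [LinearMap.coe_mk, AddHom.coe_mk, Real.norm_eq_abs]
          calc |φ (Pi.single γ v)| ≤ |C| * EN (fun γ' => ‖Pi.single γ v γ'‖) :=
                hC _ (hEsingle γ v).1
            _ ≤ |C| * (‖v‖ * EN (({γ} : Set Γ).indicator 1)) :=
                mul_le_mul_of_nonneg_left (hEsingle γ v).2 (abs_nonneg C)
            _ = |C| * EN (({γ} : Set Γ).indicator 1) * ‖v‖ := by ring) with hgdef
    have hgapply : ∀ (γ : Γ) (v : X γ), g γ v = φ (Pi.single γ v) := fun γ v => rfl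
    -- φ at 0
    have hE0 : Emem (fun γ => ‖(0 : ∀ γ, X γ) γ‖) := by
      have : (fun γ => ‖(0 : ∀ γ, X γ) γ‖) = 0 := by funext γ; simp
      rw [this]; exact hzero
    have hφ0 : φ 0 = 0 := by
      have h := hφsmul 0 0 hE0
      rw [zero_smul] at h
      simpa using h
    -- restrictions to finite sets are in the direct sum
    have hres : ∀ (s : Finset Γ) (y : ∀ γ, X γ),
        Emem (fun γ => ‖(fun γ' => if γ' ∈ s then y γ' else 0) γ‖) ∧
        EN (fun γ => ‖(fun γ' => if γ' ∈ s then y γ' else 0) γ‖)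
          ≤ EN ((∑ γ ∈ s, ‖y γ‖) • (↑s : Set Γ).indicator 1) := by
      intro s y
      have hM : Emem ((∑ γ ∈ s, ‖y γ‖) • (↑s : Set Γ).indicator 1) :=
        hsmul _ _ (hind _ s.finite_toSet)
      refine hideal _ _ ?_ hM
      intro γ
      rw [abs_norm]
      simp only [Pi.smul_apply, smul_eq_mul]
      by_cases h : γ ∈ s
      · rw [Set.indicator_of_mem (by simpa using h), Pi.one_apply, mul_one, if_pos h]
        have h1 : ‖y γ‖ ≤ ∑ γ ∈ s, ‖y γ‖ :=
          Finset.single_le_sum (fun γ _ => norm_nonneg (y γ)) h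
        exact h1.trans (le_abs_self _)
      · rw [Set.indicator_of_notMem (by simpa using h), if_neg h]
        simp
    -- finite additivity of φ over singles
    have hfin : ∀ (s : Finset Γ) (y : ∀ γ, X γ),
        φ (fun γ' => if γ' ∈ s then y γ' else 0) = ∑ γ ∈ s, g γ (y γ) := by
      intro s
      induction s using Finset.induction_on with
      | empty => intro y; simpa [Pi.zero_def] using hφ0
      | @insert a s ha ih =>
        intro y
        have hsplit : (fun γ' => if γ' ∈ insert a s then y γ' else 0)
            = Pi.single a (y a) + (fun γ' => if γ' ∈ s then y γ' else 0) := by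
          funext γ'
          by_cases h : γ' = a
          · subst h
            simp [if_neg ha]
          · have hmem : (γ' ∈ insert a s) = (γ' ∈ s) := by simp [Finset.mem_insert, h]
            simp only [Pi.add_apply, Pi.single_eq_of_ne h, zero_add, hmem]
        rw [hsplit, hφadd _ _ (hEsingle a (y a)).1 (hres s y).1, ih y,
          Finset.sum_insert ha, hgapply]
    -- the Köthe-dual summability of the norms
    have hgsum : ∀ f : Γ → ℝ, Emem f → Summable (fun γ => |f γ * ‖g γ‖|) := by
      intro f hf
      refine summable_of_sum_le (c := |C| * EN f) (fun γ => abs_nonneg _) ?_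
      intro s
      refine le_of_forall_pos_le_add fun ε hε => ?_
      set T := ∑ γ ∈ s, |f γ| with hTdef
      have hT0 : 0 ≤ T := Finset.sum_nonneg fun _ _ => abs_nonneg _
      set δ := ε / (T + 1) with hδdef
      have hδ : 0 < δ := by positivity
      choose v hv1 hv2 using fun γ => aux_dual_approx (g γ) (δ := δ) hδ
      set y : ∀ γ, X γ := fun γ => |f γ| • v γ with hydef
      set x : ∀ γ, X γ := fun γ' => if γ' ∈ s then y γ' else 0 with hxdef
      have hxle : ∀ γ, |‖x γ‖| ≤ |f γ| := by
        intro γ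
        rw [abs_norm, hxdef]
        by_cases h : γ ∈ s
        · simp only [if_pos h, hydef, norm_smul, Real.norm_eq_abs, abs_abs]
          calc |f γ| * ‖v γ‖ ≤ |f γ| * 1 := mul_le_mul_of_nonneg_left (hv1 γ) (abs_nonneg _)
            _ = |f γ| := mul_one _
        · simp [if_neg h]
      obtain ⟨hxE, hxEN⟩ := hideal _ f hxle hf
      have hφx : φ x = ∑ γ ∈ s, (|f γ| * g γ (v γ)) := by
        rw [hxdef, hfin s y]
        exact Finset.sum_congr rfl fun γ _ => by rw [hydef, map_smul, smul_eq_mul]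
      have h1 : ∑ γ ∈ s, |f γ * ‖g γ‖| ≤ φ x + δ * T := by
        rw [hφx, hTdef, Finset.mul_sum, ← Finset.sum_add_distrib]
        refine Finset.sum_le_sum fun γ _ => ?_
        rw [abs_mul, abs_norm]
        calc |f γ| * ‖g γ‖ = |f γ| * (‖g γ‖ - δ) + |f γ| * δ := by ring
          _ ≤ |f γ| * g γ (v γ) + δ * |f γ| := by
              have := mul_le_mul_of_nonneg_left (hv2 γ) (abs_nonneg (f γ))
              rw [mul_comm δ (|f γ|)]
              linarith
      have h2 : φ x ≤ |C| * EN f := by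
        calc φ x ≤ |φ x| := le_abs_self _
          _ ≤ |C| * EN (fun γ => ‖x γ‖) := hC x hxE
          _ ≤ |C| * EN f := mul_le_mul_of_nonneg_left hxEN (abs_nonneg C)
      have h3 : δ * T ≤ ε := by
        rw [hδdef, div_mul_eq_mul_div, div_le_iff₀ (by positivity)]
        nlinarith
      linarith
    -- representation of φ as a sum
    have hrep : ∀ x : ∀ γ, X γ, Emem (fun γ => ‖x γ‖) → φ x = ∑' γ, g γ (x γ) := by
      intro x hx
      obtain ⟨e, he⟩ := Countable.exists_injective_nat Γ
      have hfin' : ∀ n : ℕ, {γ : Γ | e γ < n}.Finite := by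
        intro n
        exact Set.Finite.preimage (Set.injOn_of_injective he) (Set.finite_Iio n)
      set t : ℕ → Finset Γ := fun n => (hfin' n).toFinset with htdef
      have hmem : ∀ n γ, γ ∈ t n ↔ e γ < n := by
        intro n γ; rw [htdef]; exact (hfin' n).mem_toFinset
      set xn : ℕ → ∀ γ, X γ := fun n => (fun γ' => if γ' ∈ t n then x γ' else 0) with hxndef
      -- summability of the series
      have hsummable : Summable (fun γ => g γ (x γ)) := by
        refine Summable.of_norm_bounded (hgsum _ hx) ?_
        intro γ
        calc ‖g γ (x γ)‖ ≤ ‖g γ‖ * ‖x γ‖ := (g γ).le_opNorm _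
          _ ≤ |‖x γ‖ * ‖g γ‖| := by
              rw [abs_of_nonneg (mul_nonneg (norm_nonneg _) (norm_nonneg _)), mul_comm]
      -- the finite partial sums tend to the tsum
      have hmono : Monotone t := by
        intro m n hmn γ hγ
        rw [hmem] at hγ ⊢
        omega
      have hexh : ∀ γ, ∃ n, γ ∈ t n := fun γ => ⟨e γ + 1, by rw [hmem]; omega⟩
      have htt : Tendsto t atTop atTop := tendsto_atTop_finset_of_monotone hmono hexh
      have h2 : Tendsto (fun n => ∑ γ ∈ t n, g γ (x γ)) atTop (𝓝 (∑' γ, g γ (x γ))) :=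
        hsummable.hasSum.comp htt
      -- φ xn = partial sums
      have hφxn : ∀ n, φ (xn n) = ∑ γ ∈ t n, g γ (x γ) := by
        intro n
        rw [hxndef, hfin (t n) x]
      -- Emem facts
      have hxnle : ∀ n γ, |‖xn n γ‖| ≤ |‖x γ‖| := by
        intro n γ
        simp only [abs_norm, hxndef]
        by_cases h : γ ∈ t n
        · rw [if_pos h]
        · rw [if_neg h]; simp [norm_nonneg]
      have hxnE : ∀ n, Emem (fun γ => ‖xn n γ‖) := fun n => (hideal _ _ (hxnle n) hx).1
      have hdle : ∀ n γ, |‖(x - xn n) γ‖| ≤ |‖x γ‖| := by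
        intro n γ
        simp only [abs_norm, hxndef, Pi.sub_apply]
        by_cases h : γ ∈ t n
        · rw [if_pos h]; simp
        · rw [if_neg h]; simp
      have hdE : ∀ n, Emem (fun γ => ‖(x - xn n) γ‖) := fun n => (hideal _ _ (hdle n) hx).1
      have hsplit : ∀ n, φ x = φ (xn n) + φ (x - xn n) := by
        intro n
        have : xn n + (x - xn n) = x := by abel
        rw [← this, hφadd _ _ (hxnE n) (hdE n), this]
      -- the tail estimate
      set sns : ℕ → Set Γ := fun n => {γ : Γ | n ≤ e γ} with hsnsdef
      have hnormd : ∀ n, (fun γ => ‖(x - xn n) γ‖) = (sns n).indicator (fun γ => ‖x γ‖) := by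
        intro n
        funext γ
        simp only [Pi.sub_apply, hxndef, hsnsdef]
      
        by_cases h : γ ∈ t n
        · rw [if_pos h, Set.indicator_of_notMem]
          · simp
          · rw [hmem] at h; simp only [Set.mem_setOf_eq]; omega
        · rw [if_neg h, Set.indicator_of_mem]
          · simp
          · rw [hmem] at h; simp only [Set.mem_setOf_eq]; omega
      have hOCapp : Tendsto (fun n => EN ((sns n).indicator (fun γ => ‖x γ‖))) atTop (𝓝 0) := by
        refine hOC _ hx sns ?_ ?_ ?_
        · intro n γ hγ
          simp only [hsnsdef, Set.mem_setOf_eq] at hγ ⊢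
          omega
        · ext γ
          simp only [Set.mem_iInter, hsnsdef, Set.mem_setOf_eq, Set.mem_empty_iff_false,
            iff_false, not_forall, not_le]
          exact ⟨e γ + 1, by omega⟩
        · intro n
          have : (sns n)ᶜ = {γ : Γ | e γ < n} := by
            ext γ; simp [hsnsdef]
          rw [this]; exact hfin' n
      have htail : Tendsto (fun n => φ (x - xn n)) atTop (𝓝 0) := by
        have hb : ∀ n, |φ (x - xn n)| ≤ |C| * EN ((sns n).indicator (fun γ => ‖x γ‖)) := by
          intro n
          have := hC _ (hdE n)
          rwa [hnormd n] at this
        have hb2 : Tendsto (fun n => |C| * EN ((sns n).indicator (fun γ => ‖x γ‖)))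
            atTop (𝓝 0) := by
          have := hOCapp.const_mul (|C|)
          simpa using this
        exact squeeze_zero_norm (fun n => by simpa using hb n) hb2
      have h3 : Tendsto (fun n => φ (xn n)) atTop (𝓝 (φ x)) := by
        have h4 : (fun n => φ (xn n)) = fun n => φ x - φ (x - xn n) := by
          funext n; rw [hsplit n]; ring
        rw [h4]
        simpa using tendsto_const_nhds.sub htail
      have h5 : Tendsto (fun n => φ (xn n)) atTop (𝓝 (∑' γ, g γ (x γ))) := by
        have : (fun n => φ (xn n)) = fun n => ∑ γ ∈ t n, g γ (x γ) := funext hφxn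
        rw [this]; exact h2
      exact tendsto_nhds_unique h3 h5
    refine ⟨g, ⟨hgsum, hrep⟩, ?_⟩
    rintro g' ⟨hg'sum, hg'rep⟩
    funext γ
    ext v
    have h1 := hg'rep (Pi.single γ v) (hEsingle γ v).1
    have h2 : ∑' γ', g' γ' (Pi.single γ v γ') = g' γ v := by
      have := tsum_eq_single (L := SummationFilter.unconditional Γ) (f := fun γ' => g' γ' (Pi.single γ v γ')) γ
        (fun b hb => by simp [Pi.single_eq_of_ne hb])
      simp only [Pi.single_eq_same] at this
      exact this
    rw [h2] at h1
    rw [← h1, hgapply]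
end

section
/- For 1 ≤ p < ∞ and any Banach space X, the ℓ_p-direct sum ℓ_p(X) (all sequences {xₙ} in X with Σ‖xₙ‖^p < ∞) has the Kadets–Klee property with respect to the weak topology if and only if X has the Kadets–Klee property with respect to the weak topology. -/
open Filter Topology
open scoped ENNReal

/-- The Kadets–Klee property with respect to the weak topology (property `H`), formulated for
sequences: weak convergence together with convergence of norms implies norm convergence. -/
def HasKadetsKleeWeak (Y : Type*) [NormedAddCommGroup Y] [NormedSpace ℝ Y] : Prop :=
  ∀ (u : ℕ → Y) (l : Y),
    (∀ φ : Y →L[ℝ] ℝ, Tendsto (fun n => φ (u n)) atTop (nhds (φ l))) →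
    Tendsto (fun n => ‖u n‖) atTop (nhds ‖l‖) →
    Tendsto u atTop (nhds l)

section Aux

/-- Weak lower semicontinuity of the norm, in epsilon form. -/
lemma weak_lsc_eps {Y : Type*} [NormedAddCommGroup Y] [NormedSpace ℝ Y]
    (u : ℕ → Y) (l : Y)
    (h : ∀ φ : Y →L[ℝ] ℝ, Tendsto (fun n => φ (u n)) atTop (nhds (φ l))) :
    ∀ δ > (0 : ℝ), ∀ᶠ n in atTop, ‖l‖ - δ ≤ ‖u n‖ := by
  intro δ hδ
  rcases eq_or_ne l 0 with rfl | hl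
  · filter_upwards with n
    simp only [norm_zero, zero_sub]
    linarith [norm_nonneg (u n)]
  · obtain ⟨φ, hφ1, hφl⟩ := exists_dual_vector ℝ l (norm_ne_zero_iff.mpr hl)
    have hev : ∀ᶠ n in atTop, ‖l‖ - δ < φ (u n) := by
      have : Tendsto (fun n => φ (u n)) atTop (nhds (φ l)) := h φ
      have hlt : ‖l‖ - δ < φ l := by
        rw [hφl]; simp; linarith
      exact this.eventually (eventually_gt_nhds hlt)
    filter_upwards [hev] with n hn
    have h1 : ‖φ (u n)‖ ≤ ‖φ‖ * ‖u n‖ := φ.le_opNorm (u n)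
    rw [hφ1, one_mul] at h1
    have h2 : φ (u n) ≤ ‖φ (u n)‖ := le_abs_self _
    linarith

/-- Epsilon lower bounds transfer through `rpow`. -/
lemma rpow_lower_eps {q : ℝ} (hq : 0 < q) {r : ℕ → ℝ} {a : ℝ} (ha : 0 ≤ a)
    (hr : ∀ n, 0 ≤ r n)
    (h : ∀ δ > (0 : ℝ), ∀ᶠ n in atTop, a - δ ≤ r n) :
    ∀ ε > (0 : ℝ), ∀ᶠ n in atTop, a ^ q - ε ≤ r n ^ q := by
  intro ε hε
  rcases eq_or_lt_of_le ha with h0 | hapos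
  · filter_upwards with n
    rw [← h0, Real.zero_rpow hq.ne']
    have := Real.rpow_nonneg (hr n) q
    linarith
  · -- continuity of rpow at a
    have hc : ContinuousAt (fun t : ℝ => t ^ q) a :=
      Real.continuousAt_rpow_const a q (Or.inl hapos.ne')
    have hev : ∀ᶠ t in nhds a, (fun t : ℝ => t ^ q) t > a ^ q - ε := by
      refine hc.eventually (eventually_gt_nhds ?_)
      linarith
    obtain ⟨δ0, hδ0, hball⟩ := Metric.eventually_nhds_iff.mp hev
    set t := a - min (δ0 / 2) (a / 2) with ht
    have htpos : 0 < t := by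
      have : min (δ0 / 2) (a / 2) ≤ a / 2 := min_le_right _ _
      simp only [ht]; linarith
    have htlt : dist t a < δ0 := by
      rw [Real.dist_eq, ht]
      have h1 : 0 < min (δ0 / 2) (a / 2) := lt_min (by linarith) (by linarith)
      have h2 : min (δ0 / 2) (a / 2) ≤ δ0 / 2 := min_le_left _ _
      rw [abs_of_nonpos (by linarith)]
      linarith
    have htq : a ^ q - ε < t ^ q := hball htlt
    have hmin : 0 < min (δ0 / 2) (a / 2) := lt_min (by linarith) (by linarith)
    filter_upwards [h _ hmin] with n hn
    have : t ≤ r n := by rw [ht]; linarith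
    have := Real.rpow_le_rpow htpos.le this hq.le
    linarith

/-- If `x n = y n + z n`, `x n → Y + Z`, and both `y` and `z` satisfy eventual epsilon lower
bounds by `Y` resp. `Z`, then `y n → Y`. -/
lemma tendsto_of_split {x y z : ℕ → ℝ} {Y Z : ℝ}
    (hx : Tendsto x atTop (nhds (Y + Z)))
    (hxyz : ∀ n, x n = y n + z n)
    (hy : ∀ ε > (0 : ℝ), ∀ᶠ n in atTop, Y - ε ≤ y n)
    (hz : ∀ ε > (0 : ℝ), ∀ᶠ n in atTop, Z - ε ≤ z n) :
    Tendsto y atTop (nhds Y) := by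
  rw [Metric.tendsto_atTop]
  intro ε hε
  have h1 : ∀ᶠ n in atTop, |x n - (Y + Z)| < ε / 4 :=
    (hx.eventually (Metric.ball_mem_nhds (Y + Z) (show (0:ℝ) < ε / 4 by linarith))).mono
      fun n hn => by simpa [Real.dist_eq] using hn
  have h2 := hy (ε / 2) (by linarith)
  have h3 := hz (ε / 4) (by linarith)
  have := (h1.and (h2.and h3)).exists_forall_of_atTop
  obtain ⟨N, hN⟩ := this
  refine ⟨N, fun n hn => ?_⟩
  obtain ⟨ha, hb, hc⟩ := hN n hn
  rw [Real.dist_eq, abs_lt]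
  have hxn := hxyz n
  have := abs_lt.mp ha
  constructor <;> nlinarith

lemma rpow_add_le_two_rpow {q : ℝ} (hq : 0 ≤ q) {a b : ℝ} (ha : 0 ≤ a) (hb : 0 ≤ b) :
    (a + b) ^ q ≤ 2 ^ q * (a ^ q + b ^ q) := by
  have hmax : a + b ≤ 2 * max a b := by
    rcases le_total a b with h | h
    · rw [max_eq_right h]; linarith
    · rw [max_eq_left h]; linarith
  have h0 : (0 : ℝ) ≤ max a b := le_max_of_le_left ha
  calc (a + b) ^ q ≤ (2 * max a b) ^ q :=
        Real.rpow_le_rpow (by linarith) hmax hq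
    _ = 2 ^ q * (max a b) ^ q := Real.mul_rpow (by norm_num) h0
    _ ≤ 2 ^ q * (a ^ q + b ^ q) := by
        have : (max a b) ^ q ≤ a ^ q + b ^ q := by
          rcases le_total a b with h | h
          · rw [max_eq_right h]
            have := Real.rpow_nonneg ha q
            linarith
          · rw [max_eq_left h]
            have := Real.rpow_nonneg hb q
            linarith
        have h2 : (0 : ℝ) ≤ 2 ^ q := Real.rpow_nonneg (by norm_num) q
        nlinarith

variable {X : Type*} [NormedAddCommGroup X] [NormedSpace ℝ X]
variable (p : ℝ≥0∞) [Fact (1 ≤ p)]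

lemma p_ne_zero : p ≠ 0 := by
  have h := Fact.out (p := (1 : ℝ≥0∞) ≤ p)
  intro h0; rw [h0] at h; simp at h

/-- Coordinate evaluation as a continuous linear map on `lp`. -/
noncomputable def evalCLM (k : ℕ) : lp (fun _ : ℕ => X) p →L[ℝ] X :=
  LinearMap.mkContinuous
    { toFun := fun f => f k
      map_add' := fun f g => by
        have := lp.coeFn_add f g
        exact congrFun this k
      map_smul' := fun c f => by
        have := lp.coeFn_smul c f
        exact congrFun this k }
    1 (fun f => by
      simpa using lp.norm_apply_le_norm (p_ne_zero p) f k)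

@[simp] lemma evalCLM_apply (k : ℕ) (f : lp (fun _ : ℕ => X) p) :
    evalCLM p k f = f k := rfl

lemma lp_single_add (k : ℕ) (a b : X) :
    lp.single (E := fun _ : ℕ => X) p k (a + b) =
      lp.single (E := fun _ : ℕ => X) p k a + lp.single (E := fun _ : ℕ => X) p k b := by
  refine lp.ext (funext fun j => ?_)
  rcases eq_or_ne j k with rfl | hj
  · simp only [lp.coeFn_add, Pi.add_apply, lp.single_apply_self]
  · simp only [lp.coeFn_add, Pi.add_apply, lp.single_apply_ne _ _ _ hj, add_zero]

/-- `lp.single` as a continuous linear map, for finite `p`. -/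
noncomputable def singleCLM (hp : p ≠ ⊤) (k : ℕ) : X →L[ℝ] lp (fun _ : ℕ => X) p :=
  LinearMap.mkContinuous
    { toFun := fun x => lp.single (E := fun _ : ℕ => X) p k x
      map_add' := fun a b => lp_single_add p k a b
      map_smul' := fun c a => by simp [lp.single_smul] }
    1 (fun x => by
      have hq : 0 < p.toReal :=
        ENNReal.toReal_pos (p_ne_zero p) hp
      have := lp.norm_single (E := fun _ : ℕ => X) (pos_iff_ne_zero.mpr (p_ne_zero p)) k x
      simpa using this.le)

lemma singleCLM_apply (hp : p ≠ ⊤) (k : ℕ) (x : X) :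
    singleCLM p hp k x = lp.single (E := fun _ : ℕ => X) p k x := rfl

end Aux

set_option maxHeartbeats 2000000 in
/-- For `1 ≤ p < ∞` and a Banach space `X`, the `ℓ_p`-direct sum `ℓ_p(X)` has the
Kadets–Klee property with respect to the weak topology if and only if `X` does. -/
theorem stmt8 (X : Type*) [NormedAddCommGroup X] [NormedSpace ℝ X] [CompleteSpace X]
    (p : ℝ≥0∞) [Fact (1 ≤ p)] (hp : p ≠ ⊤) :
    HasKadetsKleeWeak (lp (fun _ : ℕ => X) p) ↔ HasKadetsKleeWeak X := by
  have hq0 : 0 < p.toReal := ENNReal.toReal_pos (p_ne_zero p) hp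
  set q := p.toReal with hqdef
  constructor
  · -- lp has KK ⟹ X has KK
    intro hlp u l hw hn
    set ι := singleCLM (X := X) p hp 0 with hι
    have hU : Tendsto (fun n => ι (u n)) atTop (nhds (ι l)) := by
      apply hlp
      · intro Φ
        exact hw (Φ.comp ι)
      · have hnorm : ∀ x : X, ‖ι x‖ = ‖x‖ := fun x => by
          rw [hι, singleCLM_apply]
          simpa using lp.norm_single (E := fun _ : ℕ => X) (pos_iff_ne_zero.mpr (p_ne_zero p)) 0 x
        simp only [hnorm]
        exact hn
    have := ((evalCLM (X := X) p 0).continuous.tendsto (ι l)).comp hU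
    have heval : ∀ x : X, evalCLM (X := X) p 0 (ι x) = x := fun x => by
      rw [evalCLM_apply, hι, singleCLM_apply]
      exact lp.single_apply_self (E := fun _ : ℕ => X) p 0 x
    simpa only [Function.comp_def, heval] using this
  · -- X has KK ⟹ lp has KK
    intro hX u l hw hn
    -- the projection deleting coordinate k
    set P : ℕ → (lp (fun _ : ℕ => X) p →L[ℝ] lp (fun _ : ℕ => X) p) := fun k =>
      ContinuousLinearMap.id ℝ _ - (singleCLM p hp k).comp (evalCLM p k) with hP
    have hPapply : ∀ k (f : lp (fun _ : ℕ => X) p), P k f = f - lp.single p k (f k) := by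
      intro k f
      simp [hP, singleCLM_apply, ContinuousLinearMap.sub_apply]
    -- norm splitting identity
    have hsplit : ∀ k (f : lp (fun _ : ℕ => X) p),
        ‖f‖ ^ q = ‖f k‖ ^ q + ‖P k f‖ ^ q := by
      intro k f
      have := lp.norm_sub_norm_compl_sub_single (E := fun _ : ℕ => X) hq0 f {k}
      rw [Finset.sum_singleton] at this
      rw [hPapply k f]
      simp only [Finset.sum_singleton] at this ⊢
      linarith [this]
    -- norms to the q
    have hA : Tendsto (fun n => ‖u n‖ ^ q) atTop (nhds (‖l‖ ^ q)) :=
      hn.rpow_const (Or.inr hq0.le)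
    -- coordinatewise: norm convergence (in ^q form), then weak conv and X's KK
    have hYq : ∀ k, Tendsto (fun n => ‖u n k‖ ^ q) atTop (nhds (‖l k‖ ^ q)) := by
      intro k
      have hwk : ∀ φ : X →L[ℝ] ℝ,
          Tendsto (fun n => φ (u n k)) atTop (nhds (φ (l k))) := fun φ =>
        hw (φ.comp (evalCLM p k))
      have hwP : ∀ Φ : lp (fun _ : ℕ => X) p →L[ℝ] ℝ,
          Tendsto (fun n => Φ (P k (u n))) atTop (nhds (Φ (P k l))) := fun Φ =>
        hw (Φ.comp (P k))
      have hy : ∀ ε > (0 : ℝ), ∀ᶠ n in atTop, ‖l k‖ ^ q - ε ≤ ‖u n k‖ ^ q :=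
        rpow_lower_eps hq0 (norm_nonneg _) (fun n => norm_nonneg _)
          (weak_lsc_eps (fun n => u n k) (l k) hwk)
      have hz : ∀ ε > (0 : ℝ), ∀ᶠ n in atTop, ‖P k l‖ ^ q - ε ≤ ‖P k (u n)‖ ^ q :=
        rpow_lower_eps hq0 (norm_nonneg _) (fun n => norm_nonneg _)
          (weak_lsc_eps (fun n => P k (u n)) (P k l) hwP)
      refine tendsto_of_split (z := fun n => ‖P k (u n)‖ ^ q) ?_ (fun n => hsplit k (u n))
        hy hz
      rw [← hsplit k l]
      exact hA
    have hcoord : ∀ k, Tendsto (fun n => u n k) atTop (nhds (l k)) := by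
      intro k
      apply hX
      · exact fun φ => hw (φ.comp (evalCLM p k))
      · have := (hYq k).rpow_const (x := ‖l k‖ ^ q) (p := q⁻¹) (Or.inr (by positivity))
        rwa [Real.rpow_rpow_inv (norm_nonneg _) hq0.ne',
          funext fun n => Real.rpow_rpow_inv (norm_nonneg (u n k)) hq0.ne'] at this
    -- summability facts
    have hsumm : ∀ f : lp (fun _ : ℕ => X) p, Summable (fun j => ‖f j‖ ^ q) := fun f =>
      ((lp.hasSum_norm hq0 f).summable)
    have hnormtsum : ∀ f : lp (fun _ : ℕ => X) p, ‖f‖ ^ q = ∑' j, ‖f j‖ ^ q := fun f =>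
      lp.norm_rpow_eq_tsum hq0 f
    -- main convergence: ‖u n - l‖ ^ q → 0
    have hD : Tendsto (fun n => ‖u n - l‖ ^ q) atTop (nhds 0) := by
      rw [tendsto_order]
      constructor
      · intro b hb
        filter_upwards with n
        exact lt_of_lt_of_le hb (Real.rpow_nonneg (norm_nonneg _) q)
      · intro ε hε
        set C : ℝ := 2 ^ q with hC
        have hCpos : 0 < C := Real.rpow_pos_of_pos (by norm_num) q
        set ε' : ℝ := ε / (2 * (1 + 2 * C)) with hε'
        have hε'pos : 0 < ε' := by positivity
        -- choose K with tail of l small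
        have htail : Tendsto (fun K => ∑' j, ‖l (j + K)‖ ^ q) atTop (nhds 0) :=
          tendsto_sum_nat_add (fun j => ‖l j‖ ^ q)
        obtain ⟨K, hK⟩ := (htail.eventually
          (eventually_lt_nhds (show (0:ℝ) < ε'/2 by positivity))).exists
        -- finite part of the difference tends to 0
        have hfin0 : Tendsto (fun n => ∑ j ∈ Finset.range K, ‖(u n - l) j‖ ^ q)
            atTop (nhds 0) := by
          have : ∀ j, Tendsto (fun n => ‖(u n - l) j‖ ^ q) atTop (nhds 0) := by
            intro j
            have h1 : Tendsto (fun n => ‖u n j - l j‖) atTop (nhds 0) :=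
              tendsto_iff_norm_sub_tendsto_zero.mp (hcoord j)
            have h2 := h1.rpow_const (p := q) (Or.inr hq0.le)
            rw [Real.zero_rpow hq0.ne'] at h2
            have hc : ∀ n, ‖(u n - l) j‖ = ‖u n j - l j‖ := by
              intro n
              have h3 := congrFun (lp.coeFn_sub (u n) l) j
              simp only [Pi.sub_apply] at h3
              rw [h3]
            simpa only [hc] using h2
          have := tendsto_finset_sum (Finset.range K) (fun j _ => this j)
          simpa using this
        -- tail of u n tends to tail of l
        have htailn : Tendsto (fun n => ∑' j, ‖u n (j + K)‖ ^ q) atTop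
            (nhds (∑' j, ‖l (j + K)‖ ^ q)) := by
          have heq : ∀ f : lp (fun _ : ℕ => X) p,
              ∑' j, ‖f (j + K)‖ ^ q = ‖f‖ ^ q - ∑ j ∈ Finset.range K, ‖f j‖ ^ q := by
            intro f
            have := Summable.sum_add_tsum_nat_add (f := fun j => ‖f j‖ ^ q) K (hsumm f)
            rw [← hnormtsum f] at this
            linarith
          simp only [heq]
          have hfin : Tendsto (fun n => ∑ j ∈ Finset.range K, ‖u n j‖ ^ q) atTop
              (nhds (∑ j ∈ Finset.range K, ‖l j‖ ^ q)) :=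
            tendsto_finset_sum _ (fun j _ => hYq j)
          exact hA.sub hfin
        have hev1 : ∀ᶠ n in atTop, ∑ j ∈ Finset.range K, ‖(u n - l) j‖ ^ q < ε' :=
          hfin0.eventually (eventually_lt_nhds hε'pos)
        have hev2 : ∀ᶠ n in atTop, ∑' j, ‖u n (j + K)‖ ^ q < ε' := by
          have : (∑' j, ‖l (j + K)‖ ^ q) < ε' := by
            have := hK; linarith
          exact htailn.eventually (eventually_lt_nhds this)
        filter_upwards [hev1, hev2] with n h1 h2
        -- estimate the tail of the difference
        have hsub : ∀ j, ‖(u n - l) j‖ = ‖u n j - l j‖ := fun j => by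
          have h3 := congrFun (lp.coeFn_sub (u n) l) j
          simp only [Pi.sub_apply] at h3
          rw [h3]
        have hsummand : ∀ j, ‖(u n - l) (j + K)‖ ^ q ≤
            C * (‖u n (j + K)‖ ^ q + ‖l (j + K)‖ ^ q) := by
          intro j
          rw [hsub]
          calc ‖u n (j + K) - l (j + K)‖ ^ q ≤ (‖u n (j + K)‖ + ‖l (j + K)‖) ^ q := by
                apply Real.rpow_le_rpow (norm_nonneg _) (norm_sub_le _ _) hq0.le
            _ ≤ C * (‖u n (j + K)‖ ^ q + ‖l (j + K)‖ ^ q) :=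
                rpow_add_le_two_rpow hq0.le (norm_nonneg _) (norm_nonneg _)
        have hs1 : Summable (fun j => ‖(u n - l) (j + K)‖ ^ q) :=
          (summable_nat_add_iff K).2 (hsumm (u n - l))
        have hs2 : Summable (fun j => ‖u n (j + K)‖ ^ q) :=
          (summable_nat_add_iff K).2 (hsumm (u n))
        have hs3 : Summable (fun j => ‖l (j + K)‖ ^ q) :=
          (summable_nat_add_iff K).2 (hsumm l)
        have htailbound : ∑' j, ‖(u n - l) (j + K)‖ ^ q ≤
            C * ((∑' j, ‖u n (j + K)‖ ^ q) + ∑' j, ‖l (j + K)‖ ^ q) := by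
          calc ∑' j, ‖(u n - l) (j + K)‖ ^ q
              ≤ ∑' j, C * (‖u n (j + K)‖ ^ q + ‖l (j + K)‖ ^ q) :=
                Summable.tsum_le_tsum hsummand hs1 (((hs2.add hs3)).mul_left C)
            _ = C * ((∑' j, ‖u n (j + K)‖ ^ q) + ∑' j, ‖l (j + K)‖ ^ q) := by
                rw [tsum_mul_left, Summable.tsum_add hs2 hs3]
        have hDeq : ‖u n - l‖ ^ q =
            (∑ j ∈ Finset.range K, ‖(u n - l) j‖ ^ q) +
              ∑' j, ‖(u n - l) (j + K)‖ ^ q := by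
          rw [hnormtsum (u n - l)]
          exact (Summable.sum_add_tsum_nat_add K (hsumm (u n - l))).symm
        have htl : (∑' j, ‖l (j + K)‖ ^ q) < ε' := by linarith
        have htailnonneg : (0:ℝ) ≤ ∑' j, ‖l (j + K)‖ ^ q :=
          tsum_nonneg fun j => Real.rpow_nonneg (norm_nonneg _) q
        have h2nonneg : (0:ℝ) ≤ ∑' j, ‖u n (j + K)‖ ^ q :=
          tsum_nonneg fun j => Real.rpow_nonneg (norm_nonneg _) q
        rw [hDeq]
        have : ∑' j, ‖(u n - l) (j + K)‖ ^ q ≤ C * (ε' + ε') := by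
          refine htailbound.trans ?_
          have := mul_le_mul_of_nonneg_left
            (add_le_add h2.le htl.le) hCpos.le
          linarith
        have hfinal : (∑ j ∈ Finset.range K, ‖(u n - l) j‖ ^ q) +
            ∑' j, ‖(u n - l) (j + K)‖ ^ q < ε' + C * (ε' + ε') := by
          have h2' : ∑' j, ‖(u n - l) (j + K)‖ ^ q ≤ C * (ε' + ε') := this
          linarith
        refine hfinal.trans_le ?_
        have key : ε' * (2 * (1 + 2 * C)) = ε := by
          rw [hε']
          field_simp
        nlinarith [hε'pos.le, hCpos.le]
    -- conclude norm convergence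
    have hnormconv : Tendsto (fun n => ‖u n - l‖) atTop (nhds 0) := by
      have := hD.rpow_const (p := q⁻¹) (Or.inr (by positivity))
      rw [Real.zero_rpow (by positivity : q⁻¹ ≠ 0)] at this
      rwa [funext fun n => Real.rpow_rpow_inv (norm_nonneg (u n - l)) hq0.ne'] at this
    exact tendsto_iff_norm_sub_tendsto_zero.mpr hnormconv
end

section
/- Let 𝔗 and 𝔘 be two linear Hausdorff topologies on a vector space X with 𝔘 coarser than 𝔗. The Wiweger mixed topology γ[𝔗,𝔘], whose neighborhood base at 0 consists of sets γ(U₁,U₂,…;V) = ⋃ₙ (U₁∩V + U₂∩2V + ⋯ + Uₙ∩nV) where V ranges over a base of 𝔗-neighborhoods of 0 and the Uₖ over bases of 𝔘-neighborhoods of 0, is a linear topology on X that is coarser than 𝔗 and finer than 𝔘; moreover γ[𝔗,𝔘] coincides with 𝔘 on 𝔗-bounded subsets of X. -/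
open Filter Topology
open scoped Pointwise

section WiwegerAux

open Set

set_option linter.unusedSectionVars false

namespace Wiweger

variable {X : Type*} [AddCommGroup X] [Module ℝ X]

/-- The Wiweger mixed-topology basic set. -/
def wSet (U : ℕ → Set X) (V : Set X) : Set X :=
  ⋃ n : ℕ, {x : X | ∃ c : ℕ → X,
    (∀ k < n, c k ∈ U k ∩ (((k : ℝ) + 1) • V)) ∧ x = ∑ k ∈ Finset.range n, c k}

lemma mem_wSet {U : ℕ → Set X} {V : Set X} {x : X} :
    x ∈ wSet U V ↔ ∃ n, ∃ c : ℕ → X,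
      (∀ k < n, c k ∈ U k ∩ (((k : ℝ) + 1) • V)) ∧ x = ∑ k ∈ Finset.range n, c k := by
  simp [wSet]

lemma zero_mem_wSet (U : ℕ → Set X) (V : Set X) : (0 : X) ∈ wSet U V :=
  mem_wSet.2 ⟨0, fun _ => 0, fun k hk => absurd hk (Nat.not_lt_zero k), by simp⟩

lemma wSet_mono {U U' : ℕ → Set X} {V V' : Set X} (hU : ∀ k, U k ⊆ U' k) (hV : V ⊆ V') :
    wSet U V ⊆ wSet U' V' := by
  intro x hx
  obtain ⟨n, c, hc, rfl⟩ := mem_wSet.1 hx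
  exact mem_wSet.2 ⟨n, c, fun k hk =>
    ⟨hU k (hc k hk).1, smul_set_mono hV (hc k hk).2⟩, rfl⟩

lemma smul_nat_mono {V : Set X} (hV : Balanced ℝ V) {a b : ℕ} (h : a ≤ b) :
    ((a : ℝ) + 1) • V ⊆ ((b : ℝ) + 1) • V := by
  refine hV.smul_mono ?_
  rw [Real.norm_eq_abs, Real.norm_eq_abs, abs_of_nonneg (by positivity),
    abs_of_nonneg (by positivity)]
  exact_mod_cast Nat.add_le_add_right h 1

lemma mem_wSet_single {U : ℕ → Set X} {V : Set X} {n : ℕ}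
    (hU0 : ∀ k, k < n → (0 : X) ∈ U k) (hV0 : ∀ k, k < n → (0 : X) ∈ V)
    {x : X} (hx1 : x ∈ U n) (hx2 : x ∈ ((n : ℝ) + 1) • V) : x ∈ wSet U V := by
  refine mem_wSet.2 ⟨n + 1, fun k => if k = n then x else 0, fun k hk => ?_, ?_⟩
  · rcases eq_or_ne k n with rfl | hkn
    · simpa using ⟨hx1, hx2⟩
    · have hk' : k < n := lt_of_le_of_ne (Nat.lt_succ_iff.1 hk) hkn
      have : (0 : X) ∈ ((k : ℝ) + 1) • V := by
        simpa using smul_mem_smul_set (a := (k : ℝ) + 1) (hV0 k hk')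
      simp [hkn, hU0 k hk', this]
  · rw [Finset.sum_ite_eq' (Finset.range (n + 1)) n fun _ => x]
    simp

lemma inter_subset_wSet {U : ℕ → Set X} {V : Set X} : U 0 ∩ ((0 : ℝ) + 1) • V ⊆ wSet U V :=
  fun x hx => mem_wSet_single (n := 0) (fun k hk => absurd hk (Nat.not_lt_zero k))
    (fun k hk => absurd hk (Nat.not_lt_zero k)) hx.1 (by exact_mod_cast hx.2)

lemma sum_pad (c : ℕ → X) {n N : ℕ} (h : n ≤ N) :
    ∑ k ∈ Finset.range N, (if k < n then c k else 0) = ∑ k ∈ Finset.range n, c k := by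
  rw [← Finset.sum_subset (Finset.range_subset_range.2 h)
    (fun x _ hx => by simp [Finset.mem_range.not.1 hx])]
  exact Finset.sum_congr rfl fun x hx => by simp [Finset.mem_range.1 hx]

lemma sum_range_two_mul (e : ℕ → X) (N : ℕ) :
    ∑ j ∈ Finset.range (2 * N), e j
      = ∑ k ∈ Finset.range N, e (2 * k) + ∑ k ∈ Finset.range N, e (2 * k + 1) := by
  induction N with
  | zero => simp
  | succ N ih =>
    have : 2 * (N + 1) = (2 * N + 1) + 1 := by ring
    rw [this, Finset.sum_range_succ, Finset.sum_range_succ, ih,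
      Finset.sum_range_succ, Finset.sum_range_succ]
    abel








lemma wSet_add_subset {U : ℕ → Set X} {V : Set X}
    (hU0 : ∀ k, (0 : X) ∈ U k) (hV0 : (0 : X) ∈ V) (hVbal : Balanced ℝ V) :
    wSet (fun k => U (2 * k) ∩ U (2 * k + 1)) V + wSet (fun k => U (2 * k) ∩ U (2 * k + 1)) V
      ⊆ wSet U V := by
  rintro z ⟨x, hx, y, hy, rfl⟩
  obtain ⟨n, c, hc, rfl⟩ := mem_wSet.1 hx
  obtain ⟨m, d, hd, rfl⟩ := mem_wSet.1 hy
  set N := max n m with hN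
  set c' : ℕ → X := fun k => if k < n then c k else 0 with hc'
  set d' : ℕ → X := fun k => if k < m then d k else 0 with hd'
  set e : ℕ → X := fun j => if j % 2 = 0 then c' (j / 2) else d' (j / 2) with he
  refine mem_wSet.2 ⟨2 * N, e, ?_, ?_⟩
  · intro j hj
    rcases Nat.even_or_odd j with ⟨l, hl⟩ | ⟨l, hl⟩
    · have hj2 : j % 2 = 0 := by omega
      have hjd : j / 2 = l := by omega
      have hel : e j = c' l := by simp [he, hj2, hjd]
      rw [hel]
      by_cases hln : l < n
      · have hcl : c' l = c l := by simp [hc', hln]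
        rw [hcl]
        have h1 := (hc l hln).1
        have h2 := (hc l hln).2
        have hju : U (2 * l) ⊆ U j := by rw [show 2 * l = j by omega]
        have hsm : ((l : ℝ) + 1) • V ⊆ ((j : ℝ) + 1) • V := smul_nat_mono hVbal (by omega)
        exact ⟨hju h1.1, hsm h2⟩
      · have : c' l = 0 := by simp [hc', hln]
        rw [this]
        exact ⟨hU0 j, by simpa using smul_mem_smul_set (a := (j : ℝ) + 1) hV0⟩
    · have hj2 : ¬ j % 2 = 0 := by omega
      have hjd : j / 2 = l := by omega
      have hel : e j = d' l := by simp [he, hj2, hjd]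
      rw [hel]
      by_cases hlm : l < m
      · have hdl : d' l = d l := by simp [hd', hlm]
        rw [hdl]
        have h1 := (hd l hlm).1
        have h2 := (hd l hlm).2
        have hju : U (2 * l + 1) ⊆ U j := by rw [show 2 * l + 1 = j by omega]
        have hsm : ((l : ℝ) + 1) • V ⊆ ((j : ℝ) + 1) • V := smul_nat_mono hVbal (by omega)
        exact ⟨hju h1.2, hsm h2⟩
      · have : d' l = 0 := by simp [hd', hlm]
        rw [this]
        exact ⟨hU0 j, by simpa using smul_mem_smul_set (a := (j : ℝ) + 1) hV0⟩
  · rw [sum_range_two_mul]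
    have h1 : ∀ k, e (2 * k) = c' k := by
      intro k; simp [he, Nat.mul_div_cancel_left k (by norm_num : 0 < 2), Nat.mul_mod_right]
    have h2 : ∀ k, e (2 * k + 1) = d' k := by
      intro k
      have : (2 * k + 1) % 2 = 1 := by omega
      have h' : (2 * k + 1) / 2 = k := by omega
      simp [he, this, h']
    simp only [h1, h2]
    rw [sum_pad c (le_max_left n m), sum_pad d (le_max_right n m)]

lemma wSet_neg_subset {U : ℕ → Set X} {V : Set X} (hVbal : Balanced ℝ V) :
    wSet (fun k => -U k) V ⊆ (fun x => -x) ⁻¹' wSet U V := by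
  intro x hx
  obtain ⟨n, c, hc, rfl⟩ := mem_wSet.1 hx
  refine Set.mem_preimage.2 (mem_wSet.2 ⟨n, fun k => -c k, fun k hk => ?_, by
    rw [← Finset.sum_neg_distrib]⟩)
  refine ⟨Set.mem_neg.1 (hc k hk).1, ?_⟩
  obtain ⟨v, hv, hvc⟩ := (hc k hk).2
  refine ⟨-v, by simpa using hVbal.smul_mem (a := (-1 : ℝ)) (by norm_num) hv, ?_⟩
  show ((k : ℝ) + 1) • -v = -c k
  rw [smul_neg]; exact congrArg Neg.neg hvc

lemma wSet_ball_smul_subset {U : ℕ → Set X} {V : Set X}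
    (hUbal : ∀ k, Balanced ℝ (U k)) (hVbal : Balanced ℝ V) :
    Metric.closedBall (0 : ℝ) 1 • wSet U V ⊆ wSet U V := by
  rintro z ⟨a, ha, x, hx, rfl⟩
  have ha' : ‖a‖ ≤ 1 := by simpa [Real.norm_eq_abs] using mem_closedBall_zero_iff.1 ha
  obtain ⟨n, c, hc, rfl⟩ := mem_wSet.1 hx
  refine mem_wSet.2 ⟨n, fun k => a • c k, fun k hk => ?_, by simp [Finset.smul_sum]⟩
  refine ⟨(hUbal k).smul_mem ha' (hc k hk).1, ?_⟩
  obtain ⟨v, hv, hvc⟩ := (hc k hk).2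
  refine ⟨a • v, hVbal.smul_mem ha' hv, ?_⟩
  show ((k : ℝ) + 1) • a • v = a • c k
  rw [smul_comm]; exact congrArg (a • ·) hvc

lemma wSet_smul_left {a : ℝ} {U U' : ℕ → Set X} {V V' : Set X}
    (hU : ∀ k, Set.MapsTo (a • ·) (U' k) (U k)) (hV : Set.MapsTo (a • ·) V' V) :
    wSet U' V' ⊆ (fun x => a • x) ⁻¹' wSet U V := by
  intro x hx
  obtain ⟨n, c, hc, rfl⟩ := mem_wSet.1 hx
  refine Set.mem_preimage.2 (mem_wSet.2 ⟨n, fun k => a • c k, fun k hk => ?_, by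
    simp [Finset.smul_sum]⟩)
  refine ⟨hU k (hc k hk).1, ?_⟩
  obtain ⟨v, hv, hvc⟩ := (hc k hk).2
  refine ⟨a • v, hV hv, ?_⟩
  show ((k : ℝ) + 1) • a • v = a • c k
  rw [smul_comm]; exact congrArg (a • ·) hvc

lemma wSet_subset_of_sums {W : ℕ → Set X} {N : Set X}
    (h : ∀ n (c : ℕ → X), (∀ k < n, c k ∈ W k) → ∑ k ∈ Finset.range n, c k ∈ N) :
    wSet W Set.univ ⊆ N := by
  intro x hx
  obtain ⟨n, c, hc, rfl⟩ := mem_wSet.1 hx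
  exact h n c fun k hk => (hc k hk).1

lemma sum_mem_of_chain {W : ℕ → Set X} (h0 : ∀ k, (0 : X) ∈ W k)
    (hadd : ∀ k, W (k + 1) + W (k + 1) ⊆ W k) :
    ∀ (n j : ℕ) (c : ℕ → X), (∀ k < n, c k ∈ W (j + k + 1)) →
      ∑ k ∈ Finset.range n, c k ∈ W j := by
  intro n
  induction n with
  | zero => intro j c _; simpa using h0 j
  | succ n ih =>
    intro j c hc
    rw [Finset.sum_range_succ']
    refine hadd j (Set.add_mem_add ?_ ?_)
    · refine ih (j + 1) (fun k => c (k + 1)) fun k hk => ?_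
      have := hc (k + 1) (by omega)
      rwa [show j + 1 + k + 1 = j + (k + 1) + 1 by omega]
    · have := hc 0 (by omega)
      simpa using this


section TopHelpers

variable [t : TopologicalSpace X]

lemma zero_mem_nhd {s : Set X} (h : s ∈ 𝓝 (0 : X)) : (0 : X) ∈ s := mem_of_mem_nhds h

lemma exists_balanced [ContinuousSMul ℝ X] {V : Set X} (hV : V ∈ 𝓝 (0 : X)) :
    ∃ W ∈ 𝓝 (0 : X), Balanced ℝ W ∧ W ⊆ V :=
  ⟨balancedCore ℝ V, balancedCore_mem_nhds_zero hV, balancedCore_balanced V,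
    balancedCore_subset V⟩

lemma exists_half [IsTopologicalAddGroup X] {V : Set X} (hV : V ∈ 𝓝 (0 : X)) :
    ∃ W ∈ 𝓝 (0 : X), W + W ⊆ V := by
  obtain ⟨W, hW, h⟩ := exists_nhds_zero_half hV
  exact ⟨W, hW, Set.add_subset_iff.2 h⟩

lemma exists_chain [IsTopologicalAddGroup X] {N : Set X} (hN : N ∈ 𝓝 (0 : X)) :
    ∃ W : ℕ → Set X, (∀ k, W k ∈ 𝓝 (0 : X)) ∧ W 0 ⊆ N ∧
      ∀ k, W (k + 1) + W (k + 1) ⊆ W k := by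
  have step : ∀ s : {s : Set X // s ∈ 𝓝 (0 : X)},
      ∃ u : {s : Set X // s ∈ 𝓝 (0 : X)}, u.1 + u.1 ⊆ s.1 := by
    intro s
    obtain ⟨W, hW, h⟩ := exists_half s.2
    exact ⟨⟨W, hW⟩, h⟩
  choose f hf using step
  set F : ℕ → {s : Set X // s ∈ 𝓝 (0 : X)} := fun n => f^[n + 1] ⟨N, hN⟩ with hF
  refine ⟨fun n => (F n).1, fun n => (F n).2, ?_, ?_⟩
  · intro x hx
    have hx' : x ∈ (f ⟨N, hN⟩).1 := hx
    have h0' : (0 : X) ∈ (f ⟨N, hN⟩).1 := mem_of_mem_nhds (f ⟨N, hN⟩).2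
    have := hf ⟨N, hN⟩ (Set.add_mem_add hx' h0')
    simpa using this
  · intro k
    have hFk : F (k + 1) = f (F k) := by
      simp only [hF, Function.iterate_succ_apply']
    show (F (k + 1)).1 + (F (k + 1)).1 ⊆ (F k).1
    rw [hFk]
    exact hf (F k)

lemma preimage_smul_nhds [ContinuousSMul ℝ X] (a : ℝ) {s : Set X} (hs : s ∈ 𝓝 (0 : X)) :
    (fun x : X => a • x) ⁻¹' s ∈ 𝓝 (0 : X) := by
  have h : ContinuousAt (fun x : X => a • x) 0 := (continuous_const_smul a).continuousAt
  exact h (by simpa using hs)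

lemma eventually_smul_mem [ContinuousSMul ℝ X] (m₀ : X) {s : Set X} (hs : s ∈ 𝓝 (0 : X)) :
    ∀ᶠ a in 𝓝 (0 : ℝ), a • m₀ ∈ s := by
  have h : Filter.Tendsto (fun a : ℝ => a • m₀) (𝓝 0) (𝓝 0) := by
    have : Filter.Tendsto (fun a : ℝ => a • m₀) (𝓝 0) (𝓝 ((0 : ℝ) • m₀)) :=
      (continuous_id.smul (continuous_const : Continuous fun _ : ℝ => m₀)).tendsto (0 : ℝ)
    simpa using this
  exact h hs

lemma neg_nhds [IsTopologicalAddGroup X] {s : Set X} (hs : s ∈ 𝓝 (0 : X)) :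
    -s ∈ 𝓝 (0 : X) := by
  have heq : -s = (fun x : X => -x) ⁻¹' s := by ext x; simp [Set.mem_neg]
  rw [heq]
  have h : ContinuousAt (fun x : X => -x) 0 := continuous_neg.continuousAt
  exact h (by simpa using hs)

end TopHelpers

end Wiweger


end WiwegerAux

open Wiweger Set

/-- (Wiweger's mixed topology.) Given two linear Hausdorff topologies `T`, `U` on a
real vector space `X` with `U` coarser than `T`, there is a linear topology `γ[T,U]` on `X`
whose neighborhoods of `0` are generated by the sets
`γ(U₁,U₂,…;V) = ⋃ₙ (U₁∩V + U₂∩2V + ⋯ + Uₙ∩nV)`, which is coarser than `T`, finer than `U`,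
and coincides with `U` on `T`-bounded subsets of `X`. -/
theorem stmt17 (X : Type*) [AddCommGroup X] [Module ℝ X]
    (T U : TopologicalSpace X)
    (hTgrp : @IsTopologicalAddGroup X T _) (hTsm : @ContinuousSMul ℝ X _ _ T)
    (hTT2 : @T2Space X T)
    (hUgrp : @IsTopologicalAddGroup X U _) (hUsm : @ContinuousSMul ℝ X _ _ U)
    (hUT2 : @T2Space X U)
    -- `U` is coarser than `T`:
    (hcoarse : T ≤ U) :
    ∃ G : TopologicalSpace X,
      -- `γ[T,U]` is a linear topology:
      @IsTopologicalAddGroup X G _ ∧ @ContinuousSMul ℝ X _ _ G ∧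
      -- coarser than `T` and finer than `U`:
      T ≤ G ∧ G ≤ U ∧
      -- neighborhood base at `0` given by the Wiweger sets:
      (@nhds X G 0).HasBasis
        (fun p : (ℕ → Set X) × Set X =>
          (∀ k, p.1 k ∈ @nhds X U 0) ∧ p.2 ∈ @nhds X T 0)
        (fun p => ⋃ n : ℕ, {x : X | ∃ c : ℕ → X,
          (∀ k < n, c k ∈ p.1 k ∩ (((k : ℝ) + 1) • p.2)) ∧
          x = ∑ k ∈ Finset.range n, c k}) ∧
      -- coincides with `U` on `T`-bounded subsets:
      (∀ S : Set X,
        (∀ V ∈ @nhds X T 0, ∃ r : ℝ, 0 < r ∧ ∀ c : ℝ, r ≤ |c| → S ⊆ c • V) →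
        TopologicalSpace.induced (fun s : S => (s : X)) G =
          TopologicalSpace.induced (fun s : S => (s : X)) U) := by
  classical
  have hnTU : @nhds X T 0 ≤ @nhds X U 0 := nhds_mono hcoarse
  set P : (ℕ → Set X) × Set X → Prop :=
    fun p => (∀ k, p.1 k ∈ @nhds X U 0) ∧ p.2 ∈ @nhds X T 0 with hP
  let B : ModuleFilterBasis ℝ X :=
  { sets := (fun p : (ℕ → Set X) × Set X => wSet p.1 p.2) '' {p | P p}
    nonempty := ⟨_, ⟨(fun _ => Set.univ, Set.univ), ⟨fun _ => univ_mem, univ_mem⟩, rfl⟩⟩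
    inter_sets := by
      rintro _ _ ⟨p, hp, rfl⟩ ⟨q, hq, rfl⟩
      refine ⟨wSet (fun k => p.1 k ∩ q.1 k) (p.2 ∩ q.2),
        ⟨(fun k => p.1 k ∩ q.1 k, p.2 ∩ q.2),
          ⟨fun k => inter_mem (hp.1 k) (hq.1 k), inter_mem hp.2 hq.2⟩, rfl⟩, ?_⟩
      exact Set.subset_inter
        (wSet_mono (fun k => Set.inter_subset_left) Set.inter_subset_left)
        (wSet_mono (fun k => Set.inter_subset_right) Set.inter_subset_right)
    zero' := by rintro _ ⟨p, hp, rfl⟩; exact zero_mem_wSet _ _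
    add' := by
      rintro _ ⟨p, hp, rfl⟩
      obtain ⟨V', hV', hV'bal, hV'sub⟩ := @exists_balanced X _ _ T hTsm _ hp.2
      refine ⟨wSet (fun k => p.1 (2 * k) ∩ p.1 (2 * k + 1)) V',
        ⟨(fun k => p.1 (2 * k) ∩ p.1 (2 * k + 1), V'),
          ⟨fun k => inter_mem (hp.1 _) (hp.1 _), hV'⟩, rfl⟩, ?_⟩
      refine (wSet_add_subset (fun k => @zero_mem_nhd X _ _ U _ (hp.1 k))
        (@zero_mem_nhd X _ _ T _ hV') hV'bal).trans ?_
      exact wSet_mono (fun k => subset_rfl) hV'sub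
    neg' := by
      rintro _ ⟨p, hp, rfl⟩
      obtain ⟨V', hV', hV'bal, hV'sub⟩ := @exists_balanced X _ _ T hTsm _ hp.2
      refine ⟨wSet (fun k => -(p.1 k)) V',
        ⟨(fun k => -(p.1 k), V'),
          ⟨fun k => @neg_nhds X _ _ U hUgrp _ (hp.1 k), hV'⟩, rfl⟩, ?_⟩
      exact (wSet_neg_subset hV'bal).trans
        (Set.preimage_mono (wSet_mono (fun k => subset_rfl) hV'sub))
    conj' := by
      rintro x₀ _ ⟨p, hp, rfl⟩
      refine ⟨wSet p.1 p.2, ⟨p, hp, rfl⟩, fun x hx => ?_⟩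
      simp only [Set.mem_preimage, show x₀ + x + -x₀ = x from by abel]
      exact hx
    smul' := by
      rintro _ ⟨p, hp, rfl⟩
      obtain ⟨V', hV', hV'bal, hV'sub⟩ := @exists_balanced X _ _ T hTsm _ hp.2
      choose W hW1 hW2 hW3 using fun k => @exists_balanced X _ _ U hUsm _ (hp.1 k)
      refine ⟨Metric.closedBall (0 : ℝ) 1, Metric.closedBall_mem_nhds 0 one_pos,
        wSet W V', ⟨(W, V'), ⟨hW1, hV'⟩, rfl⟩, ?_⟩
      exact (wSet_ball_smul_subset hW2 hV'bal).trans (wSet_mono hW3 hV'sub)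
    smul_left' := by
      rintro a _ ⟨p, hp, rfl⟩
      refine ⟨wSet (fun k => (fun x : X => a • x) ⁻¹' p.1 k) ((fun x : X => a • x) ⁻¹' p.2),
        ⟨(fun k => (fun x : X => a • x) ⁻¹' p.1 k, (fun x : X => a • x) ⁻¹' p.2),
          ⟨fun k => @preimage_smul_nhds X _ _ U hUsm a _ (hp.1 k),
            @preimage_smul_nhds X _ _ T hTsm a _ hp.2⟩, rfl⟩, ?_⟩
      exact wSet_smul_left (fun k x hx => hx) (fun x hx => hx)
    smul_right' := by
      rintro m₀ _ ⟨p, hp, rfl⟩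
      have h1 : ∀ᶠ a in 𝓝 (0 : ℝ), a • m₀ ∈ p.1 0 :=
        @eventually_smul_mem X _ _ U hUsm m₀ _ (hp.1 0)
      have h2 : ∀ᶠ a in 𝓝 (0 : ℝ), a • m₀ ∈ p.2 :=
        @eventually_smul_mem X _ _ T hTsm m₀ _ hp.2
      filter_upwards [h1, h2] with a ha1 ha2
      refine mem_wSet_single (n := 0) (fun k hk => absurd hk (Nat.not_lt_zero k))
        (fun k hk => absurd hk (Nat.not_lt_zero k)) ha1 ?_
      refine ⟨a • m₀, ha2, ?_⟩
      show (((0 : ℕ) : ℝ) + 1) • (a • m₀) = a • m₀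
      norm_num }
  have hGgrp : @IsTopologicalAddGroup X B.topology _ :=
    B.toAddGroupFilterBasis.isTopologicalAddGroup
  have hbasis : (@nhds X B.topology 0).HasBasis P (fun p => wSet p.1 p.2) := by
    refine ⟨fun t => ?_⟩
    rw [B.toAddGroupFilterBasis.nhds_zero_hasBasis.mem_iff]
    constructor
    · rintro ⟨V, ⟨p, hp, rfl⟩, h⟩; exact ⟨p, hp, h⟩
    · rintro ⟨p, hp, h⟩; exact ⟨wSet p.1 p.2, ⟨p, hp, rfl⟩, h⟩
  have hG0 : @nhds X T 0 ≤ @nhds X B.topology 0 := by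
    intro s hs
    obtain ⟨p, hp, hsub⟩ := hbasis.mem_iff.1 hs
    have h1 : p.1 0 ∩ ((0 : ℝ) + 1) • p.2 ∈ @nhds X T 0 := by
      refine inter_mem (hnTU (hp.1 0)) ?_
      have he : ((0 : ℝ) + 1) • p.2 = p.2 := by rw [zero_add, one_smul]
      rw [he]; exact hp.2
    exact mem_of_superset (mem_of_superset h1 inter_subset_wSet) hsub
  have hTG : T ≤ B.topology := by
    rw [le_iff_nhds]
    intro x
    rw [← @map_add_left_nhds_zero X T _ hTgrp x,
      ← @map_add_left_nhds_zero X B.topology _ hGgrp x]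
    exact map_mono hG0
  have hGU : B.topology ≤ U := by
    rw [le_iff_nhds]
    intro x
    rw [← @map_add_left_nhds_zero X U _ hUgrp x,
      ← @map_add_left_nhds_zero X B.topology _ hGgrp x]
    refine map_mono ?_
    intro s hs
    obtain ⟨W, hW, hW0, hWadd⟩ := @exists_chain X _ _ U hUgrp _ hs
    refine hbasis.mem_iff.2 ⟨(fun k => W (k + 1), Set.univ),
      ⟨fun k => hW (k + 1), univ_mem⟩, ?_⟩
    refine wSet_subset_of_sums fun n c hc => hW0 ?_
    refine sum_mem_of_chain (fun k => @zero_mem_nhd X _ _ U _ (hW k)) hWadd n 0 c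
      fun k hk => ?_
    have := hc k hk
    rwa [show 0 + k + 1 = k + 1 by omega]
  refine ⟨B.topology, hGgrp, B.continuousSMul, hTG, hGU, hbasis, ?_⟩
  intro S hS
  refine TopologicalSpace.ext_nhds fun s => ?_
  rw [@nhds_induced X ↥S B.topology (fun x : ↥S => (x : X)) s,
    @nhds_induced X ↥S U (fun x : ↥S => (x : X)) s]
  refine le_antisymm (comap_mono (nhds_mono hGU)) ?_
  intro t ht
  obtain ⟨A, hA, hAt⟩ := mem_comap.1 ht
  rw [← @map_add_left_nhds_zero X B.topology _ hGgrp (s : X)] at hA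
  have hA0 : (fun y : X => (s : X) + y) ⁻¹' A ∈ @nhds X B.topology 0 := mem_map.1 hA
  obtain ⟨p, hp, hsub⟩ := hbasis.mem_iff.1 hA0
  obtain ⟨V₁, hV₁, hV₁add⟩ := @exists_half X _ _ T hTgrp _ hp.2
  obtain ⟨V₀, hV₀, hV₀bal, hV₀sub⟩ := @exists_balanced X _ _ T hTsm _ hV₁
  obtain ⟨r, hr, hrS⟩ := hS V₀ hV₀
  obtain ⟨n, hn⟩ := exists_nat_ge r
  have hSsub : S ⊆ ((n : ℝ) + 1) • V₀ :=
    hrS ((n : ℝ) + 1) (by rw [abs_of_nonneg (by positivity)]; linarith)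
  have key : ∀ x ∈ S, x - (s : X) ∈ ((n : ℝ) + 1) • p.2 := by
    intro x hx
    obtain ⟨a, ha, hax⟩ := hSsub hx
    obtain ⟨b, hb, hsb⟩ := hSsub s.2
    have hnb : -b ∈ V₀ := by
      simpa using hV₀bal.smul_mem (a := (-1 : ℝ)) (by norm_num) hb
    refine ⟨a - b, ?_, ?_⟩
    · have h2 := hV₁add (Set.add_mem_add (hV₀sub ha) (hV₀sub hnb))
      simpa [sub_eq_add_neg] using h2
    · show ((n : ℝ) + 1) • (a - b) = x - (s : X)
      rw [smul_sub]
      show ((n : ℝ) + 1) • a - ((n : ℝ) + 1) • b = x - (s : X)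
      rw [show ((n : ℝ) + 1) • a = x from hax, show ((n : ℝ) + 1) • b = (s : X) from hsb]
  have hpre : (fun y : X => y - (s : X)) ⁻¹' (p.1 n) ∈ @nhds X U (s : X) := by
    letI := U
    haveI := hUgrp
    have hcont : ContinuousAt (fun y : X => y - (s : X)) (s : X) :=
      (continuous_id.sub continuous_const).continuousAt
    exact hcont (by simpa using hp.1 n)
  refine mem_comap.2 ⟨_, hpre, ?_⟩
  intro y hy
  have hy' : (y : X) - (s : X) ∈ p.1 n := hy
  have h1 : (y : X) - (s : X) ∈ wSet p.1 p.2 :=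
    mem_wSet_single (n := n) (fun k hk => @zero_mem_nhd X _ _ U _ (hp.1 k))
      (fun k hk => @zero_mem_nhd X _ _ T _ hp.2) hy' (key _ y.2)
  have h2 := hsub h1
  have h3 : (y : X) ∈ A := by simpa using h2
  exact hAt (Set.mem_preimage.2 h3)
end

section
/- Let X be a normed lattice whose positive cone is rotund in the following sense: for any two distinct nonnegative x, y in the unit ball with ‖x‖ = ‖y‖ = 1, one has ‖x + y‖ < 2. Then X is strictly monotone: for any 0 ≤ y ≤ x with y ≠ x, one has ‖y‖ < ‖x‖. -/
open Filter Topology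

/-- In a normed lattice that is also a real normed space, multiplication by a nonnegative real
scalar preserves the positive cone. -/
lemma stmt19_smul_nonneg {X : Type*} [NormedAddCommGroup X] [Lattice X] [HasSolidNorm X] [IsOrderedAddMonoid X] [NormedSpace ℝ X]
    {t : ℝ} (ht : 0 ≤ t) {x : X} (hx : 0 ≤ x) : 0 ≤ t • x := by
  -- halving lemma
  have half : ∀ s : ℝ, 0 ≤ s • x → 0 ≤ (s / 2) • x := by
    intro s hs
    apply nsmul_two_semiclosed
    have : (2:ℝ) • ((s / 2) • x) = s • x := by
      rw [smul_smul]; ring_nf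
    rw [two_nsmul, ← two_smul ℝ, this]
    exact hs
  -- dyadic rationals
  have dyadic : ∀ n k : ℕ, 0 ≤ ((k : ℝ) / 2 ^ n) • x := by
    intro n
    induction n with
    | zero =>
      intro k
      simp only [pow_zero, div_one]
      rw [Nat.cast_smul_eq_nsmul]
      exact nsmul_nonneg hx k
    | succ n ih =>
      intro k
      have : ((k : ℝ) / 2 ^ (n + 1)) = ((k : ℝ) / 2 ^ n) / 2 := by
        rw [pow_succ]; ring
      rw [this]
      exact half _ (ih k)
  -- approximate t by dyadics and use closedness of the cone
  set a : ℕ → ℝ := fun n => (⌊t * 2 ^ n⌋₊ : ℝ) / 2 ^ n with ha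
  have hpow : ∀ n : ℕ, (0:ℝ) < 2 ^ n := fun n => by positivity
  have hle : ∀ n, a n ≤ t := by
    intro n
    rw [ha, div_le_iff₀ (hpow n)]
    exact Nat.floor_le (by positivity)
  have hge : ∀ n, t - 2 * (1/2) ^ n ≤ a n := by
    intro n
    rw [ha, sub_le_iff_le_add, div_add' _ _ _ (hpow n).ne', le_div_iff₀ (hpow n)]
    have h1 : t * 2 ^ n < (⌊t * 2 ^ n⌋₊ : ℝ) + 1 := Nat.lt_floor_add_one _
    have h2 : (1:ℝ) ≤ 2 * (1/2) ^ n * 2 ^ n := by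
      rw [mul_assoc, ← mul_pow]
      norm_num
    nlinarith
  have htend : Filter.Tendsto a Filter.atTop (𝓝 t) := by
    have hlow : Filter.Tendsto (fun n : ℕ => t - 2 * (1/2) ^ n) Filter.atTop (𝓝 t) := by
      have := tendsto_pow_atTop_nhds_zero_of_lt_one (by norm_num : (0:ℝ) ≤ 1/2)
        (by norm_num : (1/2 : ℝ) < 1)
      have := (this.const_mul (2:ℝ)).const_sub t
      simpa using this
    exact tendsto_of_tendsto_of_tendsto_of_le_of_le hlow tendsto_const_nhds hge hle
  have hcont : Filter.Tendsto (fun n => a n • x) Filter.atTop (𝓝 (t • x)) :=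
    (htend.smul tendsto_const_nhds)
  have hclosed : IsClosed {z : X | 0 ≤ z} := isClosed_nonneg
  have hmem : ∀ n, a n • x ∈ {z : X | 0 ≤ z} := fun n => dyadic n _
  exact hclosed.mem_of_tendsto hcont (Filter.Eventually.of_forall hmem)

/-- A normed lattice whose positive cone is rotund (distinct nonnegative norm-one
elements `x ≠ y` satisfy `‖x + y‖ < 2`) is strictly monotone: `0 ≤ y ≤ x` with `y ≠ x` implies
`‖y‖ < ‖x‖`. -/
theorem stmt19 (X : Type*) [NormedAddCommGroup X] [Lattice X] [HasSolidNorm X] [IsOrderedAddMonoid X] [NormedSpace ℝ X]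
    (hrot : ∀ x y : X, 0 ≤ x → 0 ≤ y → ‖x‖ = 1 → ‖y‖ = 1 → x ≠ y → ‖x + y‖ < 2) :
    ∀ x y : X, 0 ≤ y → y ≤ x → y ≠ x → ‖y‖ < ‖x‖ := by
  intro x y hy hyx hne
  have hx : (0:X) ≤ x := le_trans hy hyx
  have hle : ‖y‖ ≤ ‖x‖ := by
    apply HasSolidNorm.solid
    rwa [abs_of_nonneg hy, abs_of_nonneg hx]
  rcases lt_or_eq_of_le hle with h | heq
  · exact h
  · exfalso
    have hxpos : 0 < ‖x‖ := by
      rcases (norm_nonneg x).lt_or_eq with h | h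
      · exact h
      · exfalso
        have hx0 : x = 0 := norm_eq_zero.mp h.symm
        have : y = 0 := le_antisymm (hx0 ▸ hyx) hy
        exact hne (this.trans hx0.symm)
    set c := ‖x‖ with hc
    have hcne : c ≠ 0 := ne_of_gt hxpos
    have hu : ‖c⁻¹ • x‖ = 1 := by
      rw [norm_smul, norm_inv, Real.norm_of_nonneg hxpos.le, inv_mul_cancel₀ hcne]
    have hv : ‖c⁻¹ • y‖ = 1 := by
      rw [norm_smul, norm_inv, Real.norm_of_nonneg hxpos.le, ← heq,
        inv_mul_cancel₀ (by rw [heq]; exact hcne)]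
    have huv : (c⁻¹ • y) ≠ (c⁻¹ • x) := by
      intro h
      exact hne (smul_right_injective X (inv_ne_zero hcne) h)
    have hupos : (0:X) ≤ c⁻¹ • x := stmt19_smul_nonneg (inv_nonneg.mpr hxpos.le) hx
    have hvpos : (0:X) ≤ c⁻¹ • y := stmt19_smul_nonneg (inv_nonneg.mpr hxpos.le) hy
    have hlt := hrot _ _ hvpos hupos hv hu huv
    rw [← smul_add] at hlt
    have hsum : (2:ℝ) * ‖y‖ ≤ ‖y + x‖ := by
      have h2 : ((2:ℝ) • y) ≤ y + x := by
        rw [two_smul]; exact add_le_add le_rfl hyx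
      have h2n : (0:X) ≤ (2:ℝ) • y := stmt19_smul_nonneg (by norm_num) hy
      have hyx0 : (0:X) ≤ y + x := add_nonneg hy hx
      have hs : ‖(2:ℝ) • y‖ ≤ ‖y + x‖ := by
        apply HasSolidNorm.solid
        rw [abs_of_nonneg h2n, abs_of_nonneg hyx0]; exact h2
      rwa [norm_smul, Real.norm_ofNat] at hs
    rw [norm_smul, norm_inv, Real.norm_of_nonneg hxpos.le] at hlt
    have : (2:ℝ) ≤ c⁻¹ * ‖y + x‖ := by
      rw [heq] at hsum
      calc (2:ℝ) = c⁻¹ * (2 * c) := by field_simp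
        _ ≤ c⁻¹ * ‖y + x‖ := mul_le_mul_of_nonneg_left hsum (inv_nonneg.mpr hxpos.le)
    linarith
end
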